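/- Let J : ℂⁿ → ℂⁿ be multiplication by i. Then J(L₁) = L₂ and J(L₂) = L₁. -/

import Mathlib

open Complex ComplexConjugate

/-!
Multiplication by `i` sends a real vector `h` to `i · conj h = R_D(h)`, and sends `R_H(d)` back
to `d` for every `d` in the diagonal `D`. Being additive, it therefore maps the generators of `L₁`
onto those of `L₂`, hence `J(L₁) = L₂`; and since `J² = -1` preserves every additive subgroup,
`J(L₂) = J²(L₁) = L₁`.
-/

namespace Complex

theorem I_mul_conj_of_im_eq_re {z : ℂ} (h : z.im = z.re) : I * conj z = z := by
  apply Complex.ext <;> simp [h]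

theorem I_smul_image_I_smul_image {M : Type*} [AddCommGroup M] [Module ℂ M]
    (L : AddSubgroup M) : (I • ·) '' ((I • ·) '' (L : Set M)) = L := by
  simp only [Set.image_image, smul_smul, I_mul_I, neg_one_smul, Set.image_neg_eq_neg,
    neg_coe_set]

end Complex

theorem J_swaps_lattices (n : ℕ) (Hv Dv : Fin n → (Fin n → ℂ))
    (hH : ∀ i j, (Hv i j).im = 0)
    (hD : ∀ i j, (Dv i j).im = (Dv i j).re)
    (L₁ L₂ : AddSubgroup (Fin n → ℂ))
    (hL₁ : L₁ = AddSubgroup.closure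
      (Set.range Hv ∪ Set.range fun i => fun j => (starRingEnd ℂ) (Dv i j)))
    (hL₂ : L₂ = AddSubgroup.closure
      (Set.range Dv ∪ Set.range fun i => fun j => Complex.I * (starRingEnd ℂ) (Hv i j))) :
    (fun z : Fin n → ℂ => fun j => Complex.I * z j) '' (L₁ : Set (Fin n → ℂ))
        = (L₂ : Set (Fin n → ℂ)) ∧
    (fun z : Fin n → ℂ => fun j => Complex.I * z j) '' (L₂ : Set (Fin n → ℂ))
        = (L₁ : Set (Fin n → ℂ)) := by
  let J := DistribSMul.toAddMonoidHom (Fin n → ℂ) I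
  have hJH : J ∘ Hv = fun i j => I * conj (Hv i j) := by
    funext i j
    exact congrArg (I * ·) (conj_eq_iff_im.mpr (hH i j)).symm
  have hJD : (J ∘ fun i j => conj (Dv i j)) = Dv := by
    funext i j
    exact I_mul_conj_of_im_eq_re (hD i j)
  have hJL₁ : J '' L₁ = L₂ := by
    rw [hL₁, hL₂, ← AddSubgroup.coe_map, AddMonoidHom.map_closure, Set.image_union,
      ← Set.range_comp, ← Set.range_comp, hJH, hJD, Set.union_comm]
  refine ⟨hJL₁, ?_⟩
  rw [← hJL₁]
  exact I_smul_image_I_smul_image L₁
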